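/- Let B be a commutative integral domain and G a group acting on B by ring automorphisms; extend the action to the fraction field Frac(B). Assume every G-invariant element of Frac(B) lies in B, and set K := (Frac B)^G, a subfield of B. Let D be a finite free B-module of rank r equipped with an action of G by additive automorphisms that is semilinear over the action on B, i.e. g·(b·d) = (g·b)·(g·d). Then the canonical map B ⊗_K D^G → D is injective; in particular dim_K D^G ≤ r. -/

import Mathlib

/-!
Artin's argument. Let `v j` be `G`-invariant vectors that are `B`-linearly independent and let
`x` be invariant. From a relation `a • x + ∑ f j • v j = 0` with `a ≠ 0`, applying `g` and
eliminating `x` gives `a * g • f j = g • a * f j`, so `f j / a` lies in `Frac(B)^G ⊆ B`, i.e. in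
`K = B^G`; cancelling `a` in the torsion-free module `D` puts `x` in the `K`-span of the `v j`.
By induction, `K`-independent invariant vectors stay `B`-independent. The same hypothesis makes
`K` a field, so `D^G` has a `K`-basis; its image in `D` is `B`-independent, which gives both the
injectivity of `B ⊗_K D^G → D` and `dim_K D^G ≤ r`.
-/

open scoped TensorProduct

/-- The fixed subring `B^G` of a ring with a group action by ring automorphisms. -/
def fixedSubring (G : Type*) [Group G] (B : Type*) [CommRing B] [MulSemiringAction G B] :
    Subring B where
  carrier := {b : B | ∀ g : G, g • b = b}
  zero_mem' := fun g => smul_zero g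
  one_mem' := fun g => smul_one g
  add_mem' := fun {a b} ha hb g => by rw [smul_add, ha g, hb g]
  mul_mem' := fun {a b} ha hb g => by rw [smul_mul', ha g, hb g]
  neg_mem' := fun {a} ha g => by rw [smul_neg, ha g]

variable (B : Type*) [CommRing B] (G : Type*) [Group G] [MulSemiringAction G B]
variable (D : Type*) [AddCommGroup D] [Module B D] [DistribMulAction G D]

/-- The fixed points `D^G`, as a module over the fixed subring `B^G`; this requires the
`G`-action on `D` to be semilinear over the `G`-action on `B`. -/
def fixedPointsSubmodule
    (hsemi : ∀ (g : G) (b : B) (d : D), g • (b • d) = (g • b) • (g • d)) :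
    Submodule (fixedSubring G B) D where
  carrier := {d : D | ∀ g : G, g • d = d}
  add_mem' := fun {a b} ha hb g => by rw [smul_add, ha g, hb g]
  zero_mem' := fun g => smul_zero g
  smul_mem' := fun c d hd g => by
    show g • ((c : B) • d) = (c : B) • d
    rw [hsemi g (c : B) d, hd g, c.2 g]

/-- The canonical map `B ⊗_{B^G} D^G → D`, `b ⊗ d ↦ b • d`. -/
noncomputable def canonicalTensorMap
    (hsemi : ∀ (g : G) (b : B) (d : D), g • (b • d) = (g • b) • (g • d)) :
    B ⊗[fixedSubring G B] (fixedPointsSubmodule B G D hsemi) →ₗ[fixedSubring G B] D :=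
  TensorProduct.lift
    { toFun := fun b =>
        { toFun := fun d => b • (d : D)
          map_add' := fun d d' => by simp [smul_add]
          map_smul' := fun c d => by
            show b • ((c : B) • (d : D)) = (c : B) • (b • (d : D))
            rw [smul_comm] }
      map_add' := fun b b' => by
        ext d; show (b + b') • (d : D) = b • (d : D) + b' • (d : D); rw [add_smul]
      map_smul' := fun c b => by
        ext d
        show ((c : B) * b) • (d : D) = (c : B) • (b • (d : D))
        rw [mul_smul] }

section BaseChange

variable {K A V M ι : Type*} [CommRing K] [CommRing A] [Algebra K A] [AddCommGroup V] [Module K V]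
  [AddCommGroup M] [Module A M] [Module K M] [IsScalarTower K A M]

theorem injective_of_tmul_eq_smul_of_linearIndependent (b : Module.Basis ι K V)
    (w : V →ₗ[K] M) (hw : LinearIndependent A (w ∘ b)) (f : A ⊗[K] V →ₗ[K] M)
    (hf : ∀ a v, f (a ⊗ₜ v) = a • w v) : Function.Injective f := by
  let bA := Algebra.TensorProduct.basis A b
  have hw_one : ((bA.constr A (w ∘ b)).restrictScalars K).comp (TensorProduct.mk K A V 1) = w :=
    b.ext fun i => by simpa [bA] using bA.constr_basis A (w ∘ b) i
  have hf_eq : f = (bA.constr A (w ∘ b)).restrictScalars K := by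
    refine TensorProduct.ext' fun a v => ?_
    rw [hf, ← LinearMap.congr_fun hw_one v, LinearMap.comp_apply, TensorProduct.mk_apply,
      LinearMap.restrictScalars_apply, LinearMap.restrictScalars_apply, ← map_smul,
      TensorProduct.smul_tmul', smul_eq_mul, mul_one]
  rw [hf_eq]
  exact bA.injective_constr_of_linearIndependent (R₂ := A) hw

end BaseChange

section FixedPoints

variable {B G D}
variable {L : Type*} [Field L] [Algebra B L] [MulSemiringAction G L]

theorem exists_fixedSubring_mul_eq (hinj : Function.Injective (algebraMap B L))
    (hcompat : ∀ (g : G) (b : B), g • (algebraMap B L b) = algebraMap B L (g • b))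
    (hinv : ∀ x : L, (∀ g : G, g • x = x) → ∃ b : B, algebraMap B L b = x)
    {a b : B} (ha : a ≠ 0) (h : ∀ g : G, a * g • b = g • a * b) :
    ∃ c : fixedSubring G B, c * a = b := by
  set φ := algebraMap B L
  have hφ : ∀ {y : B}, y ≠ 0 → φ y ≠ 0 := fun hy => (map_ne_zero_iff φ hinj).2 hy
  have hx : ∀ g : G, g • (φ b / φ a) = φ b / φ a := fun g => by
    rw [smul_div₀', hcompat, hcompat, div_eq_div_iff (hφ ((smul_ne_zero_iff_ne g).2 ha)) (hφ ha),
      ← map_mul, ← map_mul, mul_comm _ a, h g, mul_comm]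
  obtain ⟨c, hc⟩ := hinv _ hx
  refine ⟨⟨c, fun g => hinj ?_⟩, hinj ?_⟩
  · rw [← hcompat, hc, hx g]
  · rw [map_mul, hc, div_mul_cancel₀ _ (hφ ha)]

theorem isField_fixedSubring (hinj : Function.Injective (algebraMap B L))
    (hcompat : ∀ (g : G) (b : B), g • (algebraMap B L b) = algebraMap B L (g • b))
    (hinv : ∀ x : L, (∀ g : G, g • x = x) → ∃ b : B, algebraMap B L b = x) :
    IsField (fixedSubring G B) := by
  have : Nontrivial B := (algebraMap B L).domain_nontrivial
  refine ⟨⟨0, 1, zero_ne_one⟩, mul_comm, fun {a} ha => ?_⟩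
  obtain ⟨c, hca⟩ := exists_fixedSubring_mul_eq hinj hcompat hinv
    (b := 1) (Subtype.coe_ne_coe.2 ha) fun g => by rw [a.2 g, smul_one]
  exact ⟨c, Subtype.ext (by rw [mul_comm]; exact hca)⟩

variable (hsemi : ∀ (g : G) (b : B) (d : D), g • (b • d) = (g • b) • (g • d))

theorem smul_sum_smul_fixedPoints {ι : Type*} (g : G) (s : Finset ι) (f : ι → B)
    (v : ι → fixedPointsSubmodule B G D hsemi) :
    g • ∑ j ∈ s, f j • (v j : D) = ∑ j ∈ s, (g • f j) • (v j : D) := by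
  rw [Finset.smul_sum]
  exact Finset.sum_congr rfl fun j _ => by rw [hsemi, (v j).2 g]

theorem eq_zero_of_smul_add_sum_smul_eq_zero [IsDomain B] [Module.IsTorsionFree B D]
    (hinj : Function.Injective (algebraMap B L))
    (hcompat : ∀ (g : G) (b : B), g • (algebraMap B L b) = algebraMap B L (g • b))
    (hinv : ∀ x : L, (∀ g : G, g • x = x) → ∃ b : B, algebraMap B L b = x)
    {ι : Type*} {v : ι → fixedPointsSubmodule B G D hsemi} {s : Finset ι}
    (hs : ∀ f : ι → B, ∑ j ∈ s, f j • (v j : D) = 0 → ∀ j ∈ s, f j = 0)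
    {x : fixedPointsSubmodule B G D hsemi} (hx : x ∉ Submodule.span (fixedSubring G B) (v '' s))
    {a : B} {f : ι → B} (h : a • (x : D) + ∑ j ∈ s, f j • (v j : D) = 0) : a = 0 := by
  by_contra ha
  have hrel : ∀ g : G, ∀ j ∈ s, a * g • f j = g • a * f j := fun g => by
    have hg : (g • a) • (x : D) + ∑ j ∈ s, (g • f j) • (v j : D) = 0 := by
      simpa only [smul_add, hsemi, x.2 g, smul_sum_smul_fixedPoints, smul_zero] using
        congrArg (g • ·) h
    refine fun j hj => sub_eq_zero.1 (hs (fun j => a * g • f j - g • a * f j) ?_ j hj)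
    simp only [sub_smul, mul_smul, Finset.sum_sub_distrib, ← Finset.smul_sum]
    linear_combination (norm := module) a • hg - (g • a) • h
  choose! c hca using fun j hj =>
    exists_fixedSubring_mul_eq hinj hcompat hinv ha fun g => hrel g j hj
  have hxc : (x : D) + ∑ j ∈ s, (c j : B) • (v j : D) = 0 := by
    refine (smul_eq_zero_iff_right ha).1 ?_
    rw [smul_add, Finset.smul_sum, ← h]
    exact congrArg _ (Finset.sum_congr rfl fun j hj => by rw [smul_smul, mul_comm, hca j hj])
  have hx_eq : x = -∑ j ∈ s, c j • v j := by
    ext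
    simpa [eq_neg_iff_add_eq_zero, Subring.smul_def] using hxc
  exact hx (hx_eq ▸ neg_mem (Submodule.sum_mem _ fun j hj =>
    Submodule.smul_mem _ _ (Submodule.subset_span ⟨j, hj, rfl⟩)))

theorem linearIndependent_coe_of_linearIndependent_fixedSubring [IsDomain B]
    [Module.IsTorsionFree B D] (hinj : Function.Injective (algebraMap B L))
    (hcompat : ∀ (g : G) (b : B), g • (algebraMap B L b) = algebraMap B L (g • b))
    (hinv : ∀ x : L, (∀ g : G, g • x = x) → ∃ b : B, algebraMap B L b = x)
    {ι : Type*} {v : ι → fixedPointsSubmodule B G D hsemi}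
    (hv : LinearIndependent (fixedSubring G B) v) :
    LinearIndependent B (fun i => (v i : D)) := by
  classical
  rw [linearIndependent_iff']
  intro s
  induction s using Finset.induction_on with
  | empty => simp
  | insert i s hi ih =>
    intro f hf j hj
    rw [Finset.sum_insert hi] at hf
    have hfi : f i = 0 := eq_zero_of_smul_add_sum_smul_eq_zero hsemi hinj hcompat hinv ih
      (hv.notMem_span_image (by simpa using hi)) hf
    rw [hfi, zero_smul, zero_add] at hf
    rcases Finset.mem_insert.1 hj with rfl | hj
    exacts [hfi, ih f hf j hj]

end FixedPoints

/-- Content of **Lemma 6.3**: let `B` be a commutative integral domain with a group `G` acting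
by ring automorphisms, the action being extended to `Frac(B)`.  Assume every `G`-invariant
element of `Frac(B)` lies in `B`, and let `K := (Frac B)^G`, realized as the fixed subring
`B^G` of `B` (a subfield of `B` under this assumption).  Let `D` be a finite free `B`-module of
rank `r` with a semilinear `G`-action.  Then the canonical map `B ⊗_K D^G → D` is injective;
in particular `dim_K D^G ≤ r`. -/
theorem canonicalTensorMap_injective_of_invariants_mem
    (B : Type*) [CommRing B] [IsDomain B] (G : Type*) [Group G] [MulSemiringAction G B]
    [MulSemiringAction G (FractionRing B)]
    (hcompat : ∀ (g : G) (b : B),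
      g • (algebraMap B (FractionRing B) b) = algebraMap B (FractionRing B) (g • b))
    (hinv : ∀ x : FractionRing B, (∀ g : G, g • x = x) →
      ∃ b : B, algebraMap B (FractionRing B) b = x)
    (D : Type*) [AddCommGroup D] [Module B D] [DistribMulAction G D]
    [Module.Free B D] (r : ℕ) (hrank : Module.rank B D = r)
    (hsemi : ∀ (g : G) (b : B) (d : D), g • (b • d) = (g • b) • (g • d)) :
    Function.Injective (canonicalTensorMap B G D hsemi) ∧
      Module.rank (fixedSubring G B) (fixedPointsSubmodule B G D hsemi) ≤ r := by
  have hinj := IsFractionRing.injective B (FractionRing B)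
  let _ := (isField_fixedSubring hinj hcompat hinv).toField
  let b := Module.Basis.ofVectorSpace (fixedSubring G B) (fixedPointsSubmodule B G D hsemi)
  have hb : LinearIndependent B (fun i => (b i : D)) :=
    linearIndependent_coe_of_linearIndependent_fixedSubring hsemi hinj hcompat hinv
      b.linearIndependent
  refine ⟨injective_of_tmul_eq_smul_of_linearIndependent b (Submodule.subtype _) hb _
    fun _ _ => rfl, ?_⟩
  calc Module.rank _ _ = Cardinal.mk _ := b.mk_eq_rank''.symm
    _ ≤ Module.rank B D := hb.cardinal_le_rank
    _ = r := hrank
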